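/- arXiv:1812.09833 — 3 statements merged into one kernel-verified Lean document; each statement's English description precedes it below -/
import Mathlib

section
/- The triangle multigraph T_{2,3,3} (three vertices with pairwise edge multiplicities 2, 3, 3) is strongly Z_5-connected: every Z_5-boundary β (with β(v_1)+β(v_2)+β(v_3) ≡ 0 mod 5) is achieved by some orientation. -/
/-- The direction of edge `i` under orientation `o`: if `o i = true` the
reference direction is reversed. -/
def edir {V : Type} {m : ℕ} (ends : Fin m → V × V) (o : Fin m → Bool) (i : Fin m) : V × V :=
  if o i then ((ends i).2, (ends i).1) else ends i

/-- Contribution of edge `i` to `d⁺ - d⁻` at vertex `v`, computed in `ZMod n`. -/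
def contrib {V : Type} [DecidableEq V] {m : ℕ} (n : ℕ) (ends : Fin m → V × V)
    (o : Fin m → Bool) (i : Fin m) (v : V) : ZMod n :=
  (if (edir ends o i).1 = v then 1 else 0) - (if (edir ends o i).2 = v then 1 else 0)

/-- `d⁺_D(v) - d⁻_D(v)` in `ZMod n` for the orientation `o` of the multigraph
with edge-endpoint function `ends`. -/
def netDeg {V : Type} [DecidableEq V] {m : ℕ} (n : ℕ) (ends : Fin m → V × V)
    (o : Fin m → Bool) (v : V) : ZMod n :=
  ∑ i : Fin m, contrib n ends o i v

def T233 : Fin 8 → Fin 3 × Fin 3 :=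
  ![(1, 2), (1, 2), (0, 2), (0, 2), (0, 2), (0, 1), (0, 1), (0, 1)]

/-!
Vertex `0` meets the two triples of parallel edges, vertex `1` the pair and one triple. Three
parallel edges can carry any of `±1, ±3`, i.e. any nonzero net flow mod 5, and two parallel edges
any of `0, ±2`. Choose the flow `z ∈ {0, ±2}` on the pair (`1 → 2`) avoiding `β 1` and `β 0 + β 1`;
then the flows `y = z - β 1` on the `0 → 1` triple and `x = β 0 - y` on the `0 → 2` triple are
nonzero, hence realisable, and the boundary at vertex `2` is forced by `β 0 + β 1 + β 2 = 0`.
-/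

open Finset

def dirSign (n : ℕ) (b : Bool) : ZMod n := if b then -1 else 1

theorem contrib_eq_dirSign_mul {V : Type} [DecidableEq V] {m : ℕ} (n : ℕ)
    (ends : Fin m → V × V) (o : Fin m → Bool) (i : Fin m) (v : V) :
    contrib n ends o i v = dirSign n (o i) *
      ((if (ends i).1 = v then 1 else 0) - (if (ends i).2 = v then 1 else 0)) := by
  unfold contrib edir dirSign
  cases o i <;> simp

def T233.orient (p : Fin 2 → Bool) (q r : Fin 3 → Bool) : Fin 8 → Bool :=
  ![p 0, p 1, q 0, q 1, q 2, r 0, r 1, r 2]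

theorem netDeg_T233_orient (n : ℕ) (p : Fin 2 → Bool) (q r : Fin 3 → Bool) :
    netDeg n T233 (T233.orient p q r) =
      ![(∑ i, dirSign n (q i)) + ∑ i, dirSign n (r i),
        (∑ i, dirSign n (p i)) - ∑ i, dirSign n (r i),
        -(∑ i, dirSign n (q i)) - ∑ i, dirSign n (p i)] := by
  funext v
  fin_cases v <;>
    simp only [netDeg, contrib_eq_dirSign_mul, T233, T233.orient, Fin.sum_univ_eight,
      Fin.sum_univ_three, Fin.sum_univ_two, Matrix.cons_val_zero, Matrix.cons_val_one,
      Matrix.cons_val, Fin.isValue, Fin.reduceFinMk, Fin.reduceEq, ↓reduceIte] <;>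
    ring

theorem exists_sum_dirSign_two (n : ℕ) {c : ZMod n} (hc : c ∈ ({0, 2, -2} : Finset (ZMod n))) :
    ∃ p : Fin 2 → Bool, ∑ i, dirSign n (p i) = c := by
  simp only [mem_insert, mem_singleton] at hc
  rcases hc with rfl | rfl | rfl
  · exact ⟨![false, true], by simp [dirSign]⟩
  · exact ⟨![false, false], by norm_num [dirSign]⟩
  · exact ⟨![true, true], by norm_num [dirSign]⟩

theorem exists_sum_dirSign_three {c : ZMod 5} (hc : c ≠ 0) :
    ∃ q : Fin 3 → Bool, ∑ i, dirSign 5 (q i) = c := by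
  simp only [Fin.sum_univ_three]
  revert c
  decide

theorem T233_strongly_Z5_connected (β : Fin 3 → ZMod 5) (hβ : β 0 + β 1 + β 2 = 0) :
    ∃ o : Fin 8 → Bool, ∀ v : Fin 3, netDeg 5 T233 o v = β v := by
  have hcard : #({β 1, β 0 + β 1} : Finset (ZMod 5)) < #({0, 2, -2} : Finset (ZMod 5)) :=
    card_le_two.trans_lt (by decide)
  obtain ⟨z, hz, hz_avoid⟩ := exists_mem_notMem_of_card_lt_card hcard
  simp only [mem_insert, mem_singleton, not_or] at hz_avoid
  obtain ⟨p, hp⟩ := exists_sum_dirSign_two 5 hz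
  obtain ⟨r, hr⟩ := exists_sum_dirSign_three (sub_ne_zero.2 hz_avoid.1)
  obtain ⟨q, hq⟩ := exists_sum_dirSign_three (c := β 0 - (z - β 1)) <| by
    rw [sub_sub_eq_add_sub, sub_ne_zero]; exact Ne.symm hz_avoid.2
  refine ⟨T233.orient p q r, fun v => ?_⟩
  rw [netDeg_T233_orient, hp, hq, hr]
  fin_cases v
  · simp
  · simp
  · show -(β 0 - (z - β 1)) - z = β 2
    linear_combination -hβ
end

section
/- The graph 3C_4 (the 4-cycle with each edge tripled) is strongly Z_5-connected: every Z_5-boundary is achieved by some orientation. -/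
def threeC4 : Fin 12 → Fin 4 × Fin 4 :=
  ![(0, 1), (0, 1), (0, 1), (1, 2), (1, 2), (1, 2),
    (2, 3), (2, 3), (2, 3), (3, 0), (3, 0), (3, 0)]

/-!
Each bundle of three parallel edges can carry any nonzero net flow modulo 5, and if bundle
`k → k + 1` carries flow `f k`, the net out-degree at `v` is `f v - f (v - 1)`. So it suffices to find
nowhere-zero `f` with prescribed differences `β`: these are `f k = x + β 1 + ⋯ + β k`, and as only
four values of `x` are excluded, some `x ∈ ZMod 5` works.
-/

def edgeSign (n : ℕ) (b : Bool) : ZMod n := if b then -1 else 1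

lemma contrib_eq_edgeSign_mul {V : Type} [DecidableEq V] {m : ℕ} (n : ℕ)
    (ends : Fin m → V × V) (o : Fin m → Bool) (i : Fin m) (v : V) :
    contrib n ends o i v = edgeSign n (o i) *
      ((if (ends i).1 = v then 1 else 0) - (if (ends i).2 = v then 1 else 0)) := by
  unfold contrib edir edgeSign
  cases o i <;> simp

lemma exists_add_ne_zero {ι G : Type*} [Fintype ι] [AddGroup G] [Fintype G] (s : ι → G)
    (hs : Fintype.card ι < Fintype.card G) : ∃ x : G, ∀ i, x + s i ≠ 0 := by
  classical
  obtain ⟨x, -, hx⟩ := Finset.exists_mem_notMem_of_card_lt_card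
    (s := Finset.univ.image (-s ·)) (t := Finset.univ) (Finset.card_image_le.trans_lt hs)
  exact ⟨x, fun i hxi =>
    hx (Finset.mem_image.2 ⟨i, Finset.mem_univ _, (eq_neg_of_add_eq_zero_left hxi).symm⟩)⟩

def tripleFlow (q : Fin 3 → Bool) : ZMod 5 := ∑ j, edgeSign 5 (q j)

-- Reversing `k` of the three edges gives flow `3 - 2k`, which runs through `3, 1, 4, 2`.
lemma exists_tripleFlow_eq {f : ZMod 5} (hf : f ≠ 0) :
    ∃ q : Fin 3 → Bool, tripleFlow q = f := by
  revert f; unfold tripleFlow edgeSign; decide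

/-- Edge `3 * k + j` of `threeC4` is edge `j` of the bundle from `k` to `k + 1`; it is reversed iff
`p k j`. -/
def orientByBundles (p : Fin 4 → Fin 3 → Bool) (i : Fin 12) : Bool :=
  p ⟨i / 3, by omega⟩ ⟨i % 3, by omega⟩

lemma netDeg_threeC4_orientByBundles (p : Fin 4 → Fin 3 → Bool) (v : Fin 4) :
    netDeg 5 threeC4 (orientByBundles p) v = tripleFlow (p v) - tripleFlow (p (v - 1)) := by
  simp only [netDeg, contrib_eq_edgeSign_mul, tripleFlow, Fin.sum_univ_succ, Fin.sum_univ_zero]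
  fin_cases v <;> simp [threeC4, orientByBundles, show (-1 : Fin 4) = 3 by decide] <;> ring

lemma exists_ne_zero_sub_eq (β : Fin 4 → ZMod 5) (hβ : ∑ v, β v = 0) :
    ∃ f : Fin 4 → ZMod 5, (∀ k, f k ≠ 0) ∧ ∀ v, f v - f (v - 1) = β v := by
  obtain ⟨x, hx⟩ := exists_add_ne_zero ![0, β 1, β 1 + β 2, β 1 + β 2 + β 3] (by simp)
  refine ⟨fun k => x + ![0, β 1, β 1 + β 2, β 1 + β 2 + β 3] k, hx, fun v => ?_⟩
  rw [Fin.sum_univ_four] at hβ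
  fin_cases v <;> simp
  linear_combination -hβ

theorem threeC4_strongly_Z5_connected (β : Fin 4 → ZMod 5) (hβ : ∑ v : Fin 4, β v = 0) :
    ∃ o : Fin 12 → Bool, ∀ v : Fin 4, netDeg 5 threeC4 o v = β v := by
  obtain ⟨f, hf0, hf⟩ := exists_ne_zero_sub_eq β hβ
  choose p hp using fun k => exists_tripleFlow_eq (hf0 k)
  exact ⟨orientByBundles p, fun v => by rw [netDeg_threeC4_orientByBundles, hp, hp, hf]⟩
end

section
/- Let G be a multigraph, H a connected subgraph of G, and G' = G/H the contraction of H. Given a Z_{2p+1}-boundary β of G, define β' on G' by letting β' agree with β off the contracted vertex w and setting β'(w) = Σ_{v ∈ V(H)} β(v) (mod 2p+1). If H is strongly Z_{2p+1}-connected, then every orientation of G' achieving β' extends to an orientation of G achieving β. -/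
lemma contrib_eq_of_eq {V : Type} [DecidableEq V] {m : ℕ} (n : ℕ) (ends : Fin m → V × V)
    (o o' : Fin m → Bool) (i : Fin m) (h : o i = o' i) (v : V) :
    contrib n ends o i v = contrib n ends o' i v := by
  unfold contrib edir; rw [h]

theorem contraction_extends_boundary_orientation
    {V V2 : Type} [Fintype V] [DecidableEq V] [Fintype V2] [DecidableEq V2]
    (p : ℕ) {m : ℕ} (ends : Fin m → V × V)
    -- the subgraph H, given by its vertex set S and edge set EH
    (S : Finset V) (EH : Finset (Fin m))
    (hEH : ∀ i ∈ EH, (ends i).1 ∈ S ∧ (ends i).2 ∈ S)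
    -- H is connected
    (hconn : ∀ u ∈ S, ∀ v ∈ S, Relation.ReflTransGen
      (fun x y => ∃ i ∈ EH, ends i = (x, y) ∨ ends i = (y, x)) u v)
    -- H is strongly Z_{2p+1}-connected
    (hH : ∀ γ : V → ZMod (2 * p + 1), (∑ v ∈ S, γ v) = 0 →
      ∃ oH : Fin m → Bool, ∀ v ∈ S, (∑ i ∈ EH, contrib (2 * p + 1) ends oH i v) = γ v)
    -- contraction map c : V → V2, sending exactly S to the new vertex w,
    -- injective elsewhere
    (c : V → V2) (w : V2)
    (hc1 : ∀ v, c v = w ↔ v ∈ S)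
    (hc2 : ∀ u v, u ∉ S → v ∉ S → c u = c v → u = v)
    -- β is a Z_{2p+1}-boundary of G and β2 is the induced boundary of G/H
    (β : V → ZMod (2 * p + 1)) (hβ : (∑ v : V, β v) = 0)
    (β2 : V2 → ZMod (2 * p + 1))
    (hβ2 : ∀ x, β2 x = ∑ v ∈ Finset.univ.filter (fun v => c v = x), β v)
    -- o2 is an orientation of G/H (whose edges are the edges of G not inside S)
    -- achieving β2
    (o2 : Fin m → Bool)
    (ho2 : ∀ x : V2,
      (∑ i ∈ Finset.univ.filter (fun i => ¬((ends i).1 ∈ S ∧ (ends i).2 ∈ S)),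
        contrib (2 * p + 1) (fun j => (c (ends j).1, c (ends j).2)) o2 i x) = β2 x) :
    -- there is an orientation of G achieving β that extends o2
    ∃ o : Fin m → Bool,
      (∀ i, ¬((ends i).1 ∈ S ∧ (ends i).2 ∈ S) → o i = o2 i) ∧
      ∀ v : V, netDeg (2 * p + 1) ends o v = β v := by
  classical
  set cends : Fin m → V2 × V2 := fun j => (c (ends j).1, c (ends j).2) with hcends
  set A : Finset (Fin m) :=
    Finset.univ.filter (fun i => ¬((ends i).1 ∈ S ∧ (ends i).2 ∈ S)) with hA
  have hedirc : ∀ (o : Fin m → Bool) (i : Fin m),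
      edir cends o i = (c (edir ends o i).1, c (edir ends o i).2) := by
    intro o i; by_cases h : o i <;> simp [edir, h, hcends]
  have hsumS : ∀ (o : Fin m → Bool) (i : Fin m),
      (∑ v ∈ S, contrib (2 * p + 1) ends o i v)
        = (if (edir ends o i).1 ∈ S then (1 : ZMod (2 * p + 1)) else 0)
          - (if (edir ends o i).2 ∈ S then 1 else 0) := by
    intro o i
    simp [contrib, Finset.sum_sub_distrib, Finset.sum_ite_eq]
  have hkey : ∀ (x : V) (i : Fin m), i ∈ A →
      contrib (2 * p + 1) cends o2 i (c x)
        = (if c (edir ends o2 i).1 = c x then (1 : ZMod (2 * p + 1)) else 0)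
          - (if c (edir ends o2 i).2 = c x then 1 else 0) := by
    intro x i _
    rw [contrib, hedirc]
  -- sum of γ over S is 0
  set γ : V → ZMod (2 * p + 1) :=
    fun v => β v - ∑ i ∈ EHᶜ, contrib (2 * p + 1) ends o2 i v with hγdef
  have hAEH : ∀ i ∈ A, i ∉ EH := by
    intro i hi hiEH
    have := hEH i hiEH
    simp [hA] at hi
    exact hi this.1 this.2
  have hfiltA : EHᶜ.filter (fun i => i ∈ A) = A := by
    ext i
    simp only [Finset.mem_filter, Finset.mem_compl]
    exact ⟨fun h => h.2, fun h => ⟨hAEH i h, h⟩⟩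
  have hperedge : ∀ (x : V2) (i : Fin m), i ∈ EHᶜ →
      (∑ v ∈ S, contrib (2 * p + 1) ends o2 i v)
        = if i ∈ A then contrib (2 * p + 1) cends o2 i w else 0 := by
    intro x i _
    rw [hsumS]
    by_cases hi : i ∈ A
    · rw [if_pos hi, contrib, hedirc]
      simp only [hc1]
    · have hib : (ends i).1 ∈ S ∧ (ends i).2 ∈ S := by
        by_contra hcon
        exact hi (Finset.mem_filter.mpr ⟨Finset.mem_univ i, hcon⟩)
      have h1 : (edir ends o2 i).1 ∈ S ∧ (edir ends o2 i).2 ∈ S := by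
        by_cases h : o2 i <;> simp [edir, h, hib.1, hib.2]
      simp [hi, h1.1, h1.2]
  have hfilterS : Finset.univ.filter (fun v => c v = w) = S := by
    ext v; simp [hc1]
  have hγsum : ∑ v ∈ S, γ v = 0 := by
    have h1 : ∑ v ∈ S, β v = β2 w := by rw [hβ2 w, hfilterS]
    have h2 : (∑ v ∈ S, ∑ i ∈ EHᶜ, contrib (2 * p + 1) ends o2 i v) = β2 w := by
      rw [Finset.sum_comm, Finset.sum_congr rfl (hperedge w), ← Finset.sum_filter,
        hfiltA]
      exact ho2 w
    simp only [hγdef, Finset.sum_sub_distrib, h1, h2, sub_self]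
  obtain ⟨oH, hoH⟩ := hH γ hγsum
  refine ⟨fun i => if i ∈ EH then oH i else o2 i, ?_, ?_⟩
  · intro i hi
    have : i ∉ EH := fun h => hi (hEH i h)
    simp [this]
  · intro v
    have hnet : netDeg (2 * p + 1) ends (fun i => if i ∈ EH then oH i else o2 i) v
        = (∑ i ∈ EH, contrib (2 * p + 1) ends oH i v)
          + ∑ i ∈ EHᶜ, contrib (2 * p + 1) ends o2 i v := by
      rw [netDeg, ← Finset.sum_add_sum_compl EH]
      congr 1
      · exact Finset.sum_congr rfl fun i hi =>
          contrib_eq_of_eq _ _ _ _ _ (by simp [hi]) v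
      · exact Finset.sum_congr rfl fun i hi =>
          contrib_eq_of_eq _ _ _ _ _ (by simp [Finset.mem_compl.mp hi]) v
    rw [hnet]
    by_cases hv : v ∈ S
    · rw [hoH v hv]
      simp [hγdef]
    · -- v ∉ S
      have hiff : ∀ x : V, c x = c v ↔ x = v := by
        intro x
        constructor
        · intro h
          by_cases hx : x ∈ S
          · exfalso
            have : c v = w := by rw [← h]; exact (hc1 x).mpr hx
            exact hv ((hc1 v).mp this)
          · exact hc2 x v hx hv h
        · intro h; rw [h]
      have hEHzero : (∑ i ∈ EH, contrib (2 * p + 1) ends oH i v) = 0 := by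
        refine Finset.sum_eq_zero fun i hi => ?_
        have hib := hEH i hi
        have h1 : (edir ends oH i).1 ∈ S ∧ (edir ends oH i).2 ∈ S := by
          by_cases h : oH i <;> simp [edir, h, hib.1, hib.2]
        have e1 : (edir ends oH i).1 ≠ v := fun h => hv (h ▸ h1.1)
        have e2 : (edir ends oH i).2 ≠ v := fun h => hv (h ▸ h1.2)
        simp [contrib, e1, e2]
      have hrest : (∑ i ∈ EHᶜ, contrib (2 * p + 1) ends o2 i v) = β v := by
        have hper : ∀ i ∈ EHᶜ, contrib (2 * p + 1) ends o2 i v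
            = if i ∈ A then contrib (2 * p + 1) cends o2 i (c v) else 0 := by
          intro i _
          by_cases hi : i ∈ A
          · rw [if_pos hi]
            simp only [contrib, hedirc, hiff]
          · have hib : (ends i).1 ∈ S ∧ (ends i).2 ∈ S := by
              by_contra hcon
              exact hi (Finset.mem_filter.mpr ⟨Finset.mem_univ i, hcon⟩)
            have h1 : (edir ends o2 i).1 ∈ S ∧ (edir ends o2 i).2 ∈ S := by
              by_cases h : o2 i <;> simp [edir, h, hib.1, hib.2]
            have e1 : (edir ends o2 i).1 ≠ v := fun h => hv (h ▸ h1.1)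
            have e2 : (edir ends o2 i).2 ≠ v := fun h => hv (h ▸ h1.2)
            simp [contrib, e1, e2, hi]
        rw [Finset.sum_congr rfl hper, ← Finset.sum_filter, hfiltA, ho2 (c v),
          hβ2 (c v)]
        have : Finset.univ.filter (fun u => c u = c v) = {v} := by
          ext u; simp [hiff]
        rw [this, Finset.sum_singleton]
      rw [hEHzero, hrest, zero_add]
end
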